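/- arXiv:2503.19268 — 6 statements merged into one kernel-verified Lean document; each statement's English description precedes it below -/
import Mathlib

section
/- If f : Finset U → ℝ is monotone (f(x) ≤ f(y) whenever x ⊆ y), then the inverse loss function ℓ^f(x,y) := min{|x \ s| : s ⊆ x, f(s) ≤ y} has sensitivity 1 in its first argument: for all finite sets x, x' and all y ∈ ℝ, |ℓ^f(x,y) − ℓ^f(x',y)| ≤ |x \ x'| + |x' \ x|. -/
/-!
Take an optimal witness `s ⊆ x'` for `ℓ^f(x', y)`. By monotonicity `s ∩ x ⊆ x` is a witness for
`ℓ^f(x, y)`, and `x \ s ⊆ (x \ x') ∪ (x' \ s)`, so `ℓ^f(x, y) ≤ ℓ^f(x', y) + |x \ x'|`.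
-/

variable {U : Type*} [DecidableEq U]

/-- Inverse loss `ℓ^f(x,y) = min{|x \ s| : s ⊆ x, f s ≤ y}`, `⊤` if no such `s`. -/
noncomputable def invLoss (f : Finset U → ℝ) (x : Finset U) (y : ℝ) : ℕ∞ :=
  sInf {n : ℕ∞ | ∃ s ⊆ x, f s ≤ y ∧ ((x \ s).card : ℕ∞) = n}

section

variable {f : Finset U → ℝ} {x s : Finset U} {y : ℝ}

lemma invLoss_le_card_sdiff (hsx : s ⊆ x) (hfs : f s ≤ y) : invLoss f x y ≤ (x \ s).card :=
  sInf_le ⟨s, hsx, hfs, rfl⟩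

lemma exists_invLoss_eq (h : invLoss f x y ≠ ⊤) :
    ∃ s ⊆ x, f s ≤ y ∧ invLoss f x y = (x \ s).card := by
  have hne : {n : ℕ∞ | ∃ s ⊆ x, f s ≤ y ∧ ((x \ s).card : ℕ∞) = n}.Nonempty :=
    Set.nonempty_iff_ne_empty.2 fun he => h (by rw [invLoss, he, sInf_empty])
  obtain ⟨s, hsx, hfs, hs⟩ := csInf_mem hne
  exact ⟨s, hsx, hfs, hs.symm⟩

theorem invLoss_le_invLoss_add_card_sdiff (hf : Monotone f) (x x' : Finset U) (y : ℝ) :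
    invLoss f x y ≤ invLoss f x' y + (x \ x').card := by
  by_cases htop : invLoss f x' y = ⊤
  · simp [htop]
  obtain ⟨s, hsx', hfs, hs⟩ := exists_invLoss_eq htop
  have hcard : (x \ s).card ≤ (x' \ s).card + (x \ x').card := calc
    (x \ s).card ≤ (x \ x' ∪ x' \ s).card := Finset.card_le_card (sdiff_triangle x x' s)
    _ ≤ (x \ x').card + (x' \ s).card := Finset.card_union_le _ _
    _ = (x' \ s).card + (x \ x').card := add_comm _ _
  calc invLoss f x y ≤ (x \ (x ∩ s)).card :=
        invLoss_le_card_sdiff Finset.inter_subset_left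
          ((hf Finset.inter_subset_right).trans hfs)
    _ ≤ ((x' \ s).card + (x \ x').card : ℕ) := by
        rw [Finset.sdiff_inter_self_left]
        exact_mod_cast hcard
    _ = invLoss f x' y + (x \ x').card := by rw [hs, Nat.cast_add]

end

/-- For monotone `f`, the inverse loss has sensitivity 1 in its first argument:
`|ℓ^f(x,y) − ℓ^f(x',y)| ≤ |x \ x'| + |x' \ x|`, stated as the two one-sided inequalities. -/
theorem invLoss_sensitivity (f : Finset U → ℝ)
    (hmono : ∀ a b : Finset U, a ⊆ b → f a ≤ f b)
    (x x' : Finset U) (y : ℝ) :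
    invLoss f x y ≤ invLoss f x' y + (((x \ x').card + (x' \ x).card : ℕ) : ℕ∞) ∧
    invLoss f x' y ≤ invLoss f x y + (((x \ x').card + (x' \ x).card : ℕ) : ℕ∞) := by
  have hf : Monotone f := fun a b => hmono a b
  push_cast
  exact ⟨(invLoss_le_invLoss_add_card_sdiff hf x x' y).trans (by gcongr; exact le_self_add),
    (invLoss_le_invLoss_add_card_sdiff hf x' x y).trans (by gcongr; exact le_add_self)⟩
end

section
/- If f : Finset U → ℝ is 1-Lipschitz on a down neighborhood DN_τ(x) (|f(u) − f(v)| ≤ 1 for any neighboring u, v in DN_τ(x)), then the conditional monotonization g(x) = (f(x) + |x|)/2 is 1-Lipschitz and monotone on DN_τ(x). -/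
variable {U : Type*} [DecidableEq U]

/-- Two finite sets are neighbors if one is obtained from the other by removing one element. -/
def Adj (u v : Finset U) : Prop :=
  (v ⊆ u ∧ u.card = v.card + 1) ∨ (u ⊆ v ∧ v.card = u.card + 1)

/-- The `τ`-down neighborhood of `x`. -/
def DN (τ : ℕ) (x : Finset U) : Set (Finset U) := {z | z ⊆ x ∧ (x \ z).card ≤ τ}

/-- `f` is `c`-Lipschitz on `D`: neighboring sets in `D` have values within `c`. -/
def LipOn (f : Finset U → ℝ) (c : ℝ) (D : Set (Finset U)) : Prop :=
  ∀ u ∈ D, ∀ v ∈ D, Adj u v → |f u - f v| ≤ c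

/-!
Adding one element raises `|z|` by exactly `1` and changes `f` by at most `1`, so it raises
`(f z + |z|) / 2` by an amount in `[0, 1]`. This gives the Lipschitz bound at once, and
monotonicity follows because `DN τ x` is order-connected, so any `u ⊆ v` in it are joined by
a chain of one-element insertions inside it.
-/

theorem Set.OrdConnected.monotoneOn_of_covBy {α β : Type*} [PartialOrder α]
    [LocallyFiniteOrder α] [Preorder β] {s : Set α} (hs : s.OrdConnected) {f : α → β}
    (h : ∀ a ∈ s, ∀ b ∈ s, a ⋖ b → f a ≤ f b) : MonotoneOn f s := by
  classical
  rw [monotoneOn_iff_monotone, monotone_iff_forall_covBy]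
  intro a b hab
  have hrange : (Set.range (OrderEmbedding.subtype (· ∈ s))).OrdConnected := by simpa using hs
  have hcov : (a : α) ⋖ b := by
    rwa [← hrange.apply_covBy_apply_iff (OrderEmbedding.subtype (· ∈ s))] at hab
  exact h a a.2 b b.2 hcov

theorem adj_iff_covBy_or_covBy {u v : Finset U} : Adj u v ↔ v ⋖ u ∨ u ⋖ v := by
  have key : ∀ {s t : Finset U}, s ⋖ t ↔ s ⊆ t ∧ t.card = s.card + 1 := by
    intro s t
    rw [Finset.covBy_iff_card_sdiff_eq_one]
    refine and_congr_right fun hst => ?_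
    have := Finset.card_le_card hst
    rw [Finset.card_sdiff_of_subset hst]
    omega
  rw [Adj, key, key]

theorem ordConnected_DN (τ : ℕ) (x : Finset U) : (DN τ x).OrdConnected :=
  ⟨fun _ hu _ hv _ ⟨huw, hwv⟩ =>
    ⟨hwv.trans hv.1, (Finset.card_le_card (Finset.sdiff_subset_sdiff le_rfl huw)).trans hu.2⟩⟩

noncomputable def cmon (f : Finset U → ℝ) (z : Finset U) : ℝ := (f z + z.card) / 2

omit [DecidableEq U] in
theorem cmon_le_cmon_and_le_cmon_add_one_of_covBy {f : Finset U → ℝ} {u v : Finset U}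
    (huv : u ⋖ v) (hf : |f v - f u| ≤ 1) : cmon f u ≤ cmon f v ∧ cmon f v ≤ cmon f u + 1 := by
  have hcard : (v.card : ℝ) = u.card + 1 := by
    exact_mod_cast (Nat.covBy_iff_add_one_eq.mp huv.card_finset).symm
  obtain ⟨hlo, hhi⟩ := abs_le.mp hf
  constructor <;> (unfold cmon; linarith)

theorem lipOn_cmon {f : Finset U → ℝ} {D : Set (Finset U)} (hf : LipOn f 1 D) :
    LipOn (cmon f) 1 D := by
  intro u hu v hv huv
  rcases adj_iff_covBy_or_covBy.mp huv with hvu | huv'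
  · have := cmon_le_cmon_and_le_cmon_add_one_of_covBy hvu (hf u hu v hv huv)
    exact abs_le.mpr ⟨by linarith, by linarith⟩
  · have := cmon_le_cmon_and_le_cmon_add_one_of_covBy huv'
      (abs_sub_comm (f u) (f v) ▸ hf u hu v hv huv)
    exact abs_le.mpr ⟨by linarith, by linarith⟩

theorem monotoneOn_cmon {f : Finset U → ℝ} {D : Set (Finset U)} (hf : LipOn f 1 D)
    (hD : D.OrdConnected) : MonotoneOn (cmon f) D :=
  hD.monotoneOn_of_covBy fun u hu v hv huv =>
    (cmon_le_cmon_and_le_cmon_add_one_of_covBy huv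
      (hf v hv u hu (adj_iff_covBy_or_covBy.mpr (Or.inl huv)))).1

/-- If `f` is 1-Lipschitz on `DN τ x`, then the conditional monotonization
`g z = (f z + |z|)/2` is 1-Lipschitz and monotone on `DN τ x`. -/
theorem cmon_lipschitz_monotone (f : Finset U → ℝ) (τ : ℕ) (x : Finset U)
    (hf : LipOn f 1 (DN τ x)) :
    LipOn (fun z => (f z + z.card) / 2) 1 (DN τ x) ∧
    (∀ u ∈ DN τ x, ∀ v ∈ DN τ x, u ⊆ v →
      (f u + u.card) / 2 ≤ (f v + v.card) / 2) :=
  ⟨lipOn_cmon hf, monotoneOn_cmon hf (ordConnected_DN τ x)⟩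
end

section
/- Interleaving property of stabilization: for neighbors v ⊂ u (u = v plus one element) and any ℓ ≤ h, stab_{ℓ,h+1} f(u) − 1 ≤ stab_{ℓ,h} f(v) ≤ stab_{ℓ,h} f(u). -/
/-!
Monotonicity in the ground set is immediate, since every candidate for `v` is a candidate for `u`.
For the lower bound, write `u = insert a v`. A stable `x' ⊆ u` with `|x'| ≥ h + 1` loses at most
the element `a` when passed to `x' \ {a} ⊆ v`; the result still has size `≥ h ≥ ℓ`, so it is stable,
and by the Lipschitz property of `x'` its value differs from `f x'` by at most `1`.
-/

variable {U : Type*} [DecidableEq U]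

def Stable (f : Finset U → ℝ) (l : ℤ) (x : Finset U) : Prop :=
  l ≤ (x.card : ℤ) ∧ LipOn f 1 {x' | x' ⊆ x ∧ l ≤ (x'.card : ℤ)}

noncomputable def stab (f : Finset U → ℝ) (Y : Set ℝ) (l h : ℤ) (x : Finset U) : ℝ :=
  sSup ({r : ℝ | ∃ x' ⊆ x, h ≤ (x'.card : ℤ) ∧ Stable f l x' ∧ f x' = r} ∪ {sInf Y})

section

omit [DecidableEq U]

variable {f : Finset U → ℝ} {Y : Set ℝ} {l h : ℤ}

theorem Stable.mono {x y : Finset U} (hx : Stable f l x) (hyx : y ⊆ x) (hy : l ≤ (y.card : ℤ)) :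
    Stable f l y :=
  ⟨hy, fun p hp q hq hpq => hx.2 p ⟨hp.1.trans hyx, hp.2⟩ q ⟨hq.1.trans hyx, hq.2⟩ hpq⟩

theorem bddAbove_stabValues (f : Finset U → ℝ) (Y : Set ℝ) (l h : ℤ) (x : Finset U) :
    BddAbove ({r : ℝ | ∃ x' ⊆ x, h ≤ (x'.card : ℤ) ∧ Stable f l x' ∧ f x' = r} ∪ {sInf Y}) := by
  refine (Set.Finite.union ?_ (Set.finite_singleton _)).bddAbove
  refine ((x.powerset : Set (Finset U)).toFinite.image f).subset ?_
  rintro r ⟨x', hx', -, -, rfl⟩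
  exact ⟨x', by simpa using hx', rfl⟩

theorem le_stab {x x' : Finset U} (hx' : x' ⊆ x) (hcard : h ≤ (x'.card : ℤ))
    (hstab : Stable f l x') : f x' ≤ stab f Y l h x :=
  le_csSup (bddAbove_stabValues f Y l h x) (Or.inl ⟨x', hx', hcard, hstab, rfl⟩)

theorem sInf_le_stab (x : Finset U) : sInf Y ≤ stab f Y l h x :=
  le_csSup (bddAbove_stabValues f Y l h x) (Or.inr rfl)

theorem stab_le {x : Finset U} {c : ℝ}
    (hc : ∀ x' ⊆ x, h ≤ (x'.card : ℤ) → Stable f l x' → f x' ≤ c) (hY : sInf Y ≤ c) :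
    stab f Y l h x ≤ c := by
  refine csSup_le ⟨sInf Y, Or.inr rfl⟩ ?_
  rintro r (⟨x', hx', hcard, hstab, rfl⟩ | rfl)
  exacts [hc x' hx' hcard hstab, hY]

theorem stab_mono {x y : Finset U} (hxy : x ⊆ y) : stab f Y l h x ≤ stab f Y l h y :=
  stab_le (fun _ hx' hcard hstab => le_stab (hx'.trans hxy) hcard hstab) (sInf_le_stab y)

end

section

variable {f : Finset U → ℝ} {l h : ℤ}

theorem Stable.abs_sub_erase_le {x : Finset U} {a : U} (hx : Stable f l x) (ha : a ∈ x)
    (hl : l ≤ ((x.erase a).card : ℤ)) : |f x - f (x.erase a)| ≤ 1 :=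
  hx.2 x ⟨subset_rfl, hx.1⟩ (x.erase a) ⟨x.erase_subset a, hl⟩
    (Or.inl ⟨x.erase_subset a, (Finset.card_erase_add_one ha).symm⟩)

theorem Stable.exists_stable_subset_le_add_one {x s : Finset U} {a : U} (hx : Stable f l x)
    (hxs : x ⊆ insert a s) (hlh : l ≤ h) (hcard : h + 1 ≤ (x.card : ℤ)) :
    ∃ y ⊆ s, h ≤ (y.card : ℤ) ∧ Stable f l y ∧ f x ≤ f y + 1 := by
  by_cases ha : a ∈ x
  · have hcard' : h ≤ ((x.erase a).card : ℤ) := by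
      have := Finset.card_erase_add_one ha
      omega
    refine ⟨x.erase a, Finset.subset_insert_iff.mp hxs, hcard', hx.mono (x.erase_subset a) ?_, ?_⟩
    · exact hlh.trans hcard'
    · linarith [(abs_le.mp (hx.abs_sub_erase_le ha (hlh.trans hcard'))).2]
  · exact ⟨x, (Finset.subset_insert_iff_of_notMem ha).mp hxs, by omega, hx, by linarith⟩

end

theorem stab_interleaving_general (f : Finset U → ℝ) (Y : Set ℝ)
    (l h : ℤ) (hlh : l ≤ h) (u v : Finset U)
    (hvu : v ⊆ u) (hcard : u.card = v.card + 1) :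
    stab f Y l (h + 1) u - 1 ≤ stab f Y l h v ∧ stab f Y l h v ≤ stab f Y l h u := by
  obtain ⟨a, -, rfl⟩ := Finset.exists_eq_insert_iff.mpr ⟨hvu, hcard.symm⟩
  refine ⟨sub_le_iff_le_add.mpr (stab_le (fun x hxu hx hstab => ?_) ?_), stab_mono hvu⟩
  · obtain ⟨y, hyv, hy, hystab, hxy⟩ := hstab.exists_stable_subset_le_add_one hxu hlh hx
    linarith [le_stab (Y := Y) hyv hy hystab]
  · exact le_add_of_le_of_nonneg (sInf_le_stab v) zero_le_one

/-- Interleaving: for neighbors `v ⊂ u` and `l ≤ h`,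
`stab_{l,h+1} f u − 1 ≤ stab_{l,h} f v ≤ stab_{l,h} f u`. -/
theorem stab_interleaving (f : Finset U → ℝ) (Y : Set ℝ) (hf : ∀ s : Finset U, f s ∈ Y)
    (l h : ℤ) (hlh : l ≤ h) (u v : Finset U)
    (hvu : v ⊆ u) (hcard : u.card = v.card + 1) :
    stab f Y l (h + 1) u - 1 ≤ stab f Y l h v ∧ stab f Y l h v ≤ stab f Y l h u :=
  stab_interleaving_general f Y l h hlh u v hvu hcard
end

section
/- If f is 1-Lipschitz and monotone on DN_{|u|−ℓ}(u) and ℓ ≤ h ≤ |u|, then stab_{ℓ,h} f(u) = f(u). -/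
variable {U : Type*} [DecidableEq U]

omit [DecidableEq U] in
theorem stab_eq_self_of_stable {f : Finset U → ℝ} {Y : Set ℝ} {l h : ℤ} {u : Finset U}
    (hu : Stable f l u) (hhu : h ≤ (u.card : ℤ))
    (hmono : ∀ x ⊆ u, h ≤ (x.card : ℤ) → f x ≤ f u) (hY : sInf Y ≤ f u) :
    stab f Y l h u = f u := by
  refine IsGreatest.csSup_eq ⟨Or.inl ⟨u, subset_rfl, hhu, hu, rfl⟩, ?_⟩
  rintro r (⟨x, hxu, hx, -, rfl⟩ | rfl)
  · exact hmono x hxu hx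
  · exact hY

theorem stab_eq_of_lipschitz_monotone_general (f : Finset U → ℝ) (Y : Set ℝ)
    (hbdd : BddBelow Y) (hf : ∀ s : Finset U, f s ∈ Y)
    (l h : ℤ) (u : Finset U) (hlh : l ≤ h) (hhu : h ≤ (u.card : ℤ))
    (hlip : LipOn f 1 {z | z ⊆ u ∧ l ≤ (z.card : ℤ)})
    (hmono : ∀ a b : Finset U, a ∈ {z | z ⊆ u ∧ l ≤ (z.card : ℤ)} →
      b ∈ {z | z ⊆ u ∧ l ≤ (z.card : ℤ)} → a ⊆ b → f a ≤ f b) :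
    stab f Y l h u = f u := by
  have hu_mem : u ∈ {z | z ⊆ u ∧ l ≤ (z.card : ℤ)} := ⟨subset_rfl, hlh.trans hhu⟩
  exact stab_eq_self_of_stable ⟨hlh.trans hhu, hlip⟩ hhu
    (fun x hxu hx => hmono x u ⟨hxu, hlh.trans hx⟩ hu_mem hxu) (csInf_le hbdd (hf u))

/-- If `f` is 1-Lipschitz and monotone on `DN_{|u|−l}(u)` (i.e., on subsets of `u` of
size at least `l`) and `l ≤ h ≤ |u|`, then `stab_{l,h} f u = f u`. -/
theorem stab_eq_of_lipschitz_monotone (f : Finset U → ℝ) (Y : Set ℝ)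
    (hY : Y.Nonempty) (hbdd : BddBelow Y) (hf : ∀ s : Finset U, f s ∈ Y)
    (l h : ℤ) (u : Finset U) (hlh : l ≤ h) (hhu : h ≤ (u.card : ℤ))
    (hlip : LipOn f 1 {z | z ⊆ u ∧ l ≤ (z.card : ℤ)})
    (hmono : ∀ a b : Finset U, a ∈ {z | z ⊆ u ∧ l ≤ (z.card : ℤ)} →
      b ∈ {z | z ⊆ u ∧ l ≤ (z.card : ℤ)} → a ⊆ b → f a ≤ f b) :
    stab f Y l h u = f u :=
  stab_eq_of_lipschitz_monotone_general f Y hbdd hf l h u hlh hhu hlip hmono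
end

section
/- Interleaving property of offsets for monotone functions: let g : Finset U → ℝ be monotone and let x ⊂ y be neighbors (y = x plus one element). Then for any j ∈ ℕ, g_{j+1}(y) ≤ g_j(x) ≤ g_j(y), where g_j(x) = min_{z ∈ DN_j(x)} (g(z) − |z| + |x| − j). -/
/-! Every `z ∈ DN j x` also lies in `DN (j + 1) y`, with the same value since
`|y| - (j + 1) = |x| - j`; this gives the first inequality. For the second, each `z ∈ DN j y` is
replaced by `z ∩ x ∈ DN j x`: monotonicity of `g` pays for the smaller set, and
`|z| - |z ∩ x| = |z \ x| ≤ |y \ x|` pays for the change in cardinalities. -/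

variable {U : Type*} [DecidableEq U]

noncomputable def offsetFn (g : Finset U → ℝ) (j : ℕ) (x : Finset U) : ℝ :=
  sInf {r : ℝ | ∃ z ∈ DN j x, g z - z.card + x.card - j = r}

open Finset

section Offset

variable {g : Finset U → ℝ} {j : ℕ} {x y z : Finset U}

lemma self_mem_DN (j : ℕ) (x : Finset U) : x ∈ DN j x := ⟨subset_rfl, by simp⟩

lemma offsetFn_le_of_mem_DN (hg : Monotone g) (hz : z ∈ DN j x) :
    offsetFn g j x ≤ g z - #z + #x - j := by
  refine csInf_le ⟨g ∅ - j, ?_⟩ ⟨z, hz, rfl⟩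
  rintro r ⟨w, ⟨hw, -⟩, rfl⟩
  have hgw : g ∅ ≤ g w := hg (empty_subset w)
  have hcard : (#w : ℝ) ≤ #x := mod_cast card_le_card hw
  linarith

lemma le_offsetFn {c : ℝ} (h : ∀ z ∈ DN j x, c ≤ g z - #z + #x - j) : c ≤ offsetFn g j x :=
  le_csInf ⟨_, x, self_mem_DN j x, rfl⟩ (by rintro r ⟨z, hz, rfl⟩; exact h z hz)

lemma DN_subset_DN_add_card_sdiff (hxy : x ⊆ y) : DN j x ⊆ DN (j + #(y \ x)) y := by
  rintro z ⟨hzx, hcard⟩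
  refine ⟨hzx.trans hxy, ?_⟩
  have hsplit : y \ z ⊆ (x \ z) ∪ (y \ x) := by
    intro a
    simp only [mem_sdiff, mem_union]
    tauto
  calc #(y \ z) ≤ #(x \ z) + #(y \ x) := (card_le_card hsplit).trans (card_union_le _ _)
    _ ≤ j + #(y \ x) := by omega

lemma offsetFn_add_card_sdiff_le (hg : Monotone g) (hxy : x ⊆ y) :
    offsetFn g (j + #(y \ x)) y ≤ offsetFn g j x := by
  refine le_offsetFn fun z hz => ?_
  have hyx : (#(y \ x) : ℝ) = #y - #x := by
    rw [card_sdiff_of_subset hxy, Nat.cast_sub (card_le_card hxy)]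
  calc offsetFn g (j + #(y \ x)) y ≤ g z - #z + #y - ↑(j + #(y \ x)) :=
        offsetFn_le_of_mem_DN hg (DN_subset_DN_add_card_sdiff hxy hz)
    _ = g z - #z + #x - j := by push_cast [hyx]; ring

lemma inter_mem_DN_of_mem_DN (hxy : x ⊆ y) (hz : z ∈ DN j y) : z ∩ x ∈ DN j x := by
  refine ⟨inter_subset_right, le_trans (card_le_card ?_) hz.2⟩
  intro a
  simp only [mem_sdiff, mem_inter]
  exact fun ⟨hax, hazx⟩ => ⟨hxy hax, fun haz => hazx ⟨haz, hax⟩⟩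

lemma offsetFn_monotone (hg : Monotone g) (j : ℕ) : Monotone (offsetFn g j) := by
  intro x y hxy
  refine le_offsetFn fun z hz => ?_
  have hdeficit : #z + #x ≤ #(z ∩ x) + #y := by
    have hsdiff : #(z \ x) ≤ #(y \ x) := card_le_card (sdiff_subset_sdiff hz.1 subset_rfl)
    have := card_inter_add_card_sdiff z x
    rw [card_sdiff_of_subset hxy] at hsdiff
    have := card_le_card hxy
    omega
  have hdeficit' : (#z : ℝ) + #x ≤ #(z ∩ x) + #y := mod_cast hdeficit
  calc offsetFn g j x ≤ g (z ∩ x) - #(z ∩ x) + #x - j :=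
        offsetFn_le_of_mem_DN hg (inter_mem_DN_of_mem_DN hxy hz)
    _ ≤ g z - #z + #y - j := by
        have := hg (inter_subset_left : z ∩ x ⊆ z)
        linarith

end Offset

/-- Interleaving of offsets for monotone `g`: for neighbors `x ⊂ y`,
`g_{j+1}(y) ≤ g_j(x) ≤ g_j(y)`. -/
theorem offset_interleaving (g : Finset U → ℝ)
    (hmono : ∀ a b : Finset U, a ⊆ b → g a ≤ g b)
    (x y : Finset U) (hxy : x ⊆ y) (hcard : y.card = x.card + 1) (j : ℕ) :
    offsetFn g (j + 1) y ≤ offsetFn g j x ∧ offsetFn g j x ≤ offsetFn g j y := by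
  have hg : Monotone g := fun a b => hmono a b
  have hyx : #(y \ x) = 1 := by rw [card_sdiff_of_subset hxy]; omega
  exact ⟨hyx ▸ offsetFn_add_card_sdiff_le hg hxy, offsetFn_monotone hg j hxy⟩
end

section
/- Down sensitivity of the average: if x is a multiset of n real numbers all lying in an interval of diameter σ, then for any λ < n and any submultiset z of x of size at least n − λ, |avg(x) − avg(z)| ≤ σλ/(n − λ), where avg denotes the arithmetic mean. -/
/-!
If `S` and `T` are the sums of `x` over `s` and over its complement, of sizes `m` and
`k = n - m`, then `avg x - avg z = (m T - k S) / (n m)`, and `m T - k S` is the double sum of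
`x i - x j` over `i ∉ s`, `j ∈ s`, hence at most `k m σ` in absolute value. So
`|avg x - avg z| ≤ σ k / n ≤ σ λ / (n - λ)`.
-/

open Finset

section
variable {ι R : Type*}

theorem card_mul_sum_sub_card_mul_sum [CommRing R] (s t : Finset ι) (f : ι → R) :
    (#s : R) * ∑ i ∈ t, f i - #t * ∑ j ∈ s, f j = ∑ i ∈ t, ∑ j ∈ s, (f i - f j) := by
  simp only [sum_sub_distrib, sum_const, nsmul_eq_mul, mul_sum]

theorem abs_card_mul_sum_sub_card_mul_sum_le [CommRing R] [LinearOrder R] [IsOrderedRing R]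
    {s t : Finset ι} {f : ι → R} {σ : R} (hf : ∀ i ∈ t, ∀ j ∈ s, |f i - f j| ≤ σ) :
    |(#s : R) * ∑ i ∈ t, f i - #t * ∑ j ∈ s, f j| ≤ #t * #s * σ := by
  rw [card_mul_sum_sub_card_mul_sum]
  calc |∑ i ∈ t, ∑ j ∈ s, (f i - f j)|
      ≤ ∑ i ∈ t, ∑ j ∈ s, |f i - f j| :=
        (abs_sum_le_sum_abs _ _).trans (sum_le_sum fun i _ => abs_sum_le_sum_abs _ _)
    _ ≤ ∑ i ∈ t, ∑ j ∈ s, σ := sum_le_sum fun i hi => sum_le_sum fun j hj => hf i hi j hj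
    _ = #t * #s * σ := by simp only [sum_const, nsmul_eq_mul]; ring

variable [Fintype ι] [DecidableEq ι]

theorem sum_div_card_sub_sum_div_card [Field R] [CharZero R] {s : Finset ι} (hs : s.Nonempty)
    (f : ι → R) :
    (∑ i, f i) / Fintype.card ι - (∑ i ∈ s, f i) / #s =
      (#s * ∑ i ∈ sᶜ, f i - #sᶜ * ∑ i ∈ s, f i) / (Fintype.card ι * #s) := by
  have hcard : (#s : R) + #sᶜ = Fintype.card ι := by exact_mod_cast card_add_card_compl s
  have hs₀ : (#s : R) ≠ 0 := by exact_mod_cast hs.card_pos.ne'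
  have hn₀ : (Fintype.card ι : R) ≠ 0 := by
    exact_mod_cast (Fintype.card_pos_iff.mpr ⟨hs.choose⟩).ne'
  rw [← sum_add_sum_compl s f, div_sub_div _ _ hn₀ hs₀, ← hcard]
  ring

theorem abs_sum_div_card_sub_sum_div_card_le [Field R] [LinearOrder R] [IsStrictOrderedRing R]
    {s : Finset ι} (hs : s.Nonempty) {f : ι → R} {σ : R}
    (hf : ∀ i ∉ s, ∀ j ∈ s, |f i - f j| ≤ σ) :
    |(∑ i, f i) / Fintype.card ι - (∑ i ∈ s, f i) / #s| ≤ σ * #sᶜ / Fintype.card ι := by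
  have hs₀ : (0 : R) < #s := by exact_mod_cast hs.card_pos
  have hn₀ : (0 : R) < Fintype.card ι := by
    exact_mod_cast Fintype.card_pos_iff.mpr ⟨hs.choose⟩
  have hnum := abs_card_mul_sum_sub_card_mul_sum_le (s := s) (t := sᶜ) (f := f)
    fun i hi => hf i (mem_compl.mp hi)
  rw [sum_div_card_sub_sum_div_card hs, abs_div, abs_of_pos (mul_pos hn₀ hs₀),
    div_le_div_iff₀ (mul_pos hn₀ hs₀) hn₀]
  calc _ ≤ #sᶜ * #s * σ * Fintype.card ι := by gcongr
    _ = σ * #sᶜ * (Fintype.card ι * #s) := by ring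

end

theorem avg_down_sensitivity_general (n lam : ℕ) (hlam : lam < n) (σ : ℝ)
    (x : Fin n → ℝ) (hdiam : ∀ i j : Fin n, |x i - x j| ≤ σ)
    (s : Finset (Fin n)) (hs : n - lam ≤ s.card) :
    |(∑ i, x i) / (n : ℝ) - (∑ i ∈ s, x i) / (s.card : ℝ)| ≤
      σ * (lam : ℝ) / ((n : ℝ) - (lam : ℝ)) := by
  have hσ : 0 ≤ σ := (abs_nonneg _).trans (hdiam ⟨0, by omega⟩ ⟨0, by omega⟩)
  have hs₀ : s.Nonempty := card_pos.mp (by omega)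
  have hcompl : (#sᶜ : ℝ) ≤ lam := by
    rw [card_compl, Fintype.card_fin]
    exact_mod_cast (by omega : n - #s ≤ lam)
  have hgap : (0 : ℝ) < n - lam := sub_pos.mpr (by exact_mod_cast hlam)
  calc _ ≤ σ * #sᶜ / n := by
        simpa using abs_sum_div_card_sub_sum_div_card_le hs₀ fun i _ j _ => hdiam i j
    _ ≤ σ * lam / (n - lam) := by
        apply div_le_div₀ (by positivity) (by gcongr) hgap
        linarith [lam.cast_nonneg (α := ℝ)]

/-- Down sensitivity of the average: if all `n` entries of `x` lie in an interval of
diameter `σ` and `z` (indexed by `s`) keeps at least `n − λ` of them (`λ < n`), then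
`|avg x − avg z| ≤ σ λ / (n − λ)`. -/
theorem avg_down_sensitivity (n lam : ℕ) (hlam : lam < n) (σ : ℝ) (hσ : 0 ≤ σ)
    (x : Fin n → ℝ) (hdiam : ∀ i j : Fin n, |x i - x j| ≤ σ)
    (s : Finset (Fin n)) (hs : n - lam ≤ s.card) :
    |(∑ i, x i) / (n : ℝ) - (∑ i ∈ s, x i) / (s.card : ℝ)| ≤
      σ * (lam : ℝ) / ((n : ℝ) - (lam : ℝ)) :=
  avg_down_sensitivity_general n lam hlam σ x hdiam s hs
end
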